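/- For every positive integer n, the game tiny-n, defined as +_n = {0 | {0 | -n}}, is strictly positive but less than every positive dyadic rational game; in particular 0 < +_n < 1/2^k for all k ≥ 0. -/

import Mathlib

/-! Combinatorial game theory (`SetTheory.PGame`) has been removed from Mathlib; the
definitions the statement needs are reproduced here with their old meaning. -/

universe u

namespace SetTheory

/-- Pre-games (as in the older Mathlib). -/
inductive PGame : Type (u + 1)
  | mk : ∀ α β : Type u, (α → PGame) → (β → PGame) → PGame

namespace PGame

/-- The indexing type for allowable moves by Left. -/
def LeftMoves : PGame → Type u
  | mk l _ _ _ => l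

/-- The indexing type for allowable moves by Right. -/
def RightMoves : PGame → Type u
  | mk _ r _ _ => r

/-- The new game after Left makes an allowed move. -/
def moveLeft : ∀ g : PGame, LeftMoves g → PGame
  | mk _l _ L _ => L

/-- The new game after Right makes an allowed move. -/
def moveRight : ∀ g : PGame, RightMoves g → PGame
  | mk _ _r _ R => R

/-- Construct a pre-game from list of pre-games describing the available moves for Left and
Right. -/
def ofLists (L R : List PGame.{u}) : PGame.{u} :=
  mk (ULift (Fin L.length)) (ULift (Fin R.length)) (fun i => L[i.down.1]) fun j ↦ R[j.down.1]

/-- `x` is an option of `y` if Left or Right can move from `y` to `x`. -/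
inductive IsOption : PGame → PGame → Prop
  | moveLeft {x : PGame} (i : x.LeftMoves) : IsOption (x.moveLeft i) x
  | moveRight {x : PGame} (i : x.RightMoves) : IsOption (x.moveRight i) x

theorem wf_isOption : WellFounded IsOption :=
  ⟨fun x => by
    induction x with
    | mk l r L R IHl IHr =>
      refine Acc.intro _ fun y h => ?_
      cases h with
      | moveLeft i => exact IHl i
      | moveRight j => exact IHr j⟩

/-- The pre-game `Zero` is defined by `0 = { | }`. -/
instance : Zero PGame :=
  ⟨⟨PEmpty, PEmpty, PEmpty.elim, PEmpty.elim⟩⟩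

/-- The negation of `{L | R}` is `{-R | -L}`. -/
def neg : PGame → PGame
  | ⟨l, r, L, R⟩ => ⟨r, l, fun i => neg (R i), fun i => neg (L i)⟩

instance : Neg PGame :=
  ⟨neg⟩

/-- The less or equal relation on pre-games. -/
instance le : LE PGame :=
  ⟨Sym2.GameAdd.recursion wf_isOption fun x y le =>
      (∀ i, ¬le y (x.moveLeft i) (Sym2.GameAdd.snd_fst <| IsOption.moveLeft i)) ∧
        ∀ j, ¬le (y.moveRight j) x (Sym2.GameAdd.fst_snd <| IsOption.moveRight j)⟩

/-- `x < y` iff `x ≤ y` and not `y ≤ x` (as for the old `Preorder PGame`). -/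
instance : LT PGame :=
  ⟨fun x y => x ≤ y ∧ ¬y ≤ x⟩

end PGame

end SetTheory

open SetTheory PGame
open scoped PGame

/-- The integer game `n`: `0 = { | }` and `n = {n-1 | }` for `n > 0`. -/
def natGame : ℕ → PGame
  | 0 => 0
  | n + 1 => PGame.ofLists [natGame n] []

/-- The game `1/2^k`: `halfPow 0 = 1` and `halfPow (k+1) = {0 | halfPow k}`. -/
def halfPow : ℕ → PGame
  | 0 => natGame 1
  | k + 1 => PGame.ofLists [0] [halfPow k]

/-- The game tiny-n, `+_n = {0 | {0 | -n}}`. -/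
def tiny (n : ℕ) : PGame :=
  PGame.ofLists [0] [PGame.ofLists [0] [-natGame n]]

/-! A game `{0 | R}` is never `≤` a game `x` without left options, as its left option `0` is
`≥ x`; it is `> x` once moreover `x ⧏` each of its right options. All the games `1/2^k` have the
shape `{0 | R}` with right options of the same shape, so `x ≤ 1/2^k` for every game `x` without
left options, such as `0` and `-n`. Consequently a game `{0 | R}` lies below every `1/2^k` as
soon as one of its right options does: this applies first to `{0 | -n}`, whose right option is
`-n`, and then to `+_n`, whose right option is `{0 | -n}`. -/

namespace SetTheory.PGame

/-- "Less or fuzzy". -/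
def LF (x y : PGame) : Prop := ¬y ≤ x

infix:50 " ⧏ " => LF

theorem le_iff_forall_lf {x y : PGame} :
    x ≤ y ↔ (∀ i, x.moveLeft i ⧏ y) ∧ ∀ j, x ⧏ y.moveRight j := by
  unfold LE.le le
  simp only
  rw [Sym2.GameAdd.recursion_eq]
  rfl

theorem lt_iff_le_and_lf {x y : PGame} : x < y ↔ x ≤ y ∧ x ⧏ y := Iff.rfl

theorem le_of_lt {x y : PGame} (h : x < y) : x ≤ y := h.1

theorem le_of_isEmpty {x y : PGame} [IsEmpty x.LeftMoves] [IsEmpty y.RightMoves] : x ≤ y :=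
  le_iff_forall_lf.2 ⟨isEmptyElim, isEmptyElim⟩

instance isEmpty_zero_leftMoves : IsEmpty (0 : PGame).LeftMoves :=
  inferInstanceAs (IsEmpty PEmpty)

instance isEmpty_zero_rightMoves : IsEmpty (0 : PGame).RightMoves :=
  inferInstanceAs (IsEmpty PEmpty)

instance isEmpty_neg_leftMoves (x : PGame) [h : IsEmpty x.RightMoves] :
    IsEmpty (-x).LeftMoves := by
  cases x
  exact h

theorem forall_ofLists_moveLeft {L R : List PGame} {p : PGame → Prop} :
    (∀ i, p ((ofLists L R).moveLeft i)) ↔ ∀ a ∈ L, p a :=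
  ⟨fun h a ha => by
    obtain ⟨i, hi, rfl⟩ := List.getElem_of_mem ha
    exact h ⟨⟨i, hi⟩⟩, fun h i => h _ (List.getElem_mem i.down.2)⟩

theorem forall_ofLists_moveRight {L R : List PGame} {p : PGame → Prop} :
    (∀ j, p ((ofLists L R).moveRight j)) ↔ ∀ b ∈ R, p b :=
  ⟨fun h b hb => by
    obtain ⟨i, hi, rfl⟩ := List.getElem_of_mem hb
    exact h ⟨⟨i, hi⟩⟩, fun h i => h _ (List.getElem_mem i.down.2)⟩

theorem ofLists_le_ofLists_iff {L R L' R' : List PGame} :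
    ofLists L R ≤ ofLists L' R' ↔ (∀ a ∈ L, a ⧏ ofLists L' R') ∧ ∀ b ∈ R', ofLists L R ⧏ b := by
  rw [le_iff_forall_lf]
  exact and_congr (forall_ofLists_moveLeft (p := (· ⧏ _)))
    (forall_ofLists_moveRight (p := (_ ⧏ ·)))

theorem le_ofLists_iff {x : PGame} [IsEmpty x.LeftMoves] {L R : List PGame} :
    x ≤ ofLists L R ↔ ∀ b ∈ R, x ⧏ b := by
  rw [le_iff_forall_lf, and_iff_right isEmptyElim]
  exact forall_ofLists_moveRight (p := (x ⧏ ·))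

theorem lf_ofLists {x a : PGame} {L R : List PGame} (ha : a ∈ L) (h : x ≤ a) :
    x ⧏ ofLists L R := by
  obtain ⟨i, hi, rfl⟩ := List.getElem_of_mem ha
  exact fun h' => (le_iff_forall_lf.1 h').1 ⟨⟨i, hi⟩⟩ h

theorem ofLists_lf {b y : PGame} {L R : List PGame} (hb : b ∈ R) (h : b ≤ y) :
    ofLists L R ⧏ y := by
  obtain ⟨i, hi, rfl⟩ := List.getElem_of_mem hb
  exact fun h' => (le_iff_forall_lf.1 h').2 ⟨⟨i, hi⟩⟩ h

theorem lf_ofLists_zero {x : PGame} [IsEmpty x.LeftMoves] {R : List PGame} :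
    x ⧏ ofLists [0] R :=
  lf_ofLists (List.mem_singleton_self 0) le_of_isEmpty

theorem lt_ofLists_zero {x : PGame} [IsEmpty x.LeftMoves] {R : List PGame}
    (h : ∀ b ∈ R, x ⧏ b) : x < ofLists [0] R :=
  lt_iff_le_and_lf.2 ⟨le_ofLists_iff.2 h, lf_ofLists_zero⟩

end SetTheory.PGame

instance isEmpty_natGame_rightMoves (n : ℕ) : IsEmpty (natGame n).RightMoves := by
  cases n
  · exact inferInstanceAs (IsEmpty PEmpty)
  · exact inferInstanceAs (IsEmpty (ULift (Fin 0)))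

theorem lf_halfPow {x : PGame} [IsEmpty x.LeftMoves] (k : ℕ) : x ⧏ halfPow k := by
  cases k <;> exact lf_ofLists_zero

theorem le_halfPow {x : PGame} [IsEmpty x.LeftMoves] (k : ℕ) : x ≤ halfPow k := by
  cases k with
  | zero => exact le_ofLists_iff.2 (by simp)
  | succ k => exact le_ofLists_iff.2 (by simpa using lf_halfPow k)

theorem ofLists_zero_lt_halfPow {b : PGame} {R : List PGame} (hb : b ∈ R)
    (h : ∀ k, b ≤ halfPow k) (k : ℕ) : ofLists [0] R < halfPow k := by
  have left_lf : ∀ a ∈ [(0 : PGame)], a ⧏ halfPow k := by simpa using lf_halfPow k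
  refine lt_iff_le_and_lf.2 ⟨?_, ofLists_lf hb (h k)⟩
  cases k with
  | zero => exact ofLists_le_ofLists_iff.2 ⟨left_lf, by simp⟩
  | succ k => exact ofLists_le_ofLists_iff.2 ⟨left_lf, by simpa using ofLists_lf hb (h k)⟩

theorem tiny_pos_lt_halfPow_general (n : ℕ) :
    0 < tiny n ∧ ∀ k : ℕ, tiny n < halfPow k := by
  have right_lt : ∀ k, ofLists [0] [-natGame n] < halfPow k :=
    ofLists_zero_lt_halfPow (List.mem_singleton_self _) le_halfPow
  exact ⟨lt_ofLists_zero (by simpa using lf_ofLists_zero),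
    ofLists_zero_lt_halfPow (List.mem_singleton_self _) fun k => le_of_lt (right_lt k)⟩

/-- For every positive integer `n`, `+_n` is strictly positive but less than every
positive dyadic rational game `1/2^k`. -/
theorem tiny_pos_lt_halfPow (n : ℕ) (hn : 0 < n) :
    0 < tiny n ∧ ∀ k : ℕ, tiny n < halfPow k :=
  tiny_pos_lt_halfPow_general n
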